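/- The function φ_← is complex-differentiable on the open set B(1,1)∖(−∞,1]. -/

import Mathlib

/-!
Positive reals do not move arguments, so `(t w)^{1/2} = t^{1/2} w^{1/2}` and, with `w = z - 1`,
`φ_←(z) = 2 w^{3/2} ∫_0^1 t^{1/2} (1 + t w)^{-1/2} dt`. For `w` off `(-∞, 0]` every `1 + t w`
with `0 ≤ t ≤ 1` stays off the branch cut, so the integrand and its `w`-derivative are jointly
continuous on `slitPlane × [0, 1]`; a bound for the derivative on a compact neighbourhood
justifies differentiating under the integral sign.
-/

open Complex Metric

/-- `φ_←(z) = 2(z−1)·∫_0^1 (t(z−1))^{1/2}·(1+t(z−1))^{−1/2} dt`, the integral of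
`2(s−1)^{1/2} s^{−1/2}` over the straight segment from `1` to `z` (principal powers). -/
noncomputable def phiLeft (z : ℂ) : ℂ :=
  2 * (z - 1) *
    ∫ t in (0:ℝ)..1, ((t : ℂ) * (z - 1)) ^ ((1 : ℂ)/2) * (1 + (t : ℂ) * (z - 1)) ^ (-((1 : ℂ)/2))

open MeasureTheory Set Topology
open scoped Interval

theorem intervalIntegral.hasDerivAt_integral_of_continuousOn {𝕜 E : Type*} [RCLike 𝕜]
    [NormedAddCommGroup E] [NormedSpace ℝ E] [NormedSpace 𝕜 E]
    {F F' : 𝕜 → ℝ → E} {U : Set 𝕜} {a b : ℝ} {x₀ : 𝕜} (hU : U ∈ 𝓝 x₀)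
    (hF : ContinuousOn (fun p : 𝕜 × ℝ => F p.1 p.2) (U ×ˢ [[a, b]]))
    (hF' : ContinuousOn (fun p : 𝕜 × ℝ => F' p.1 p.2) (U ×ˢ [[a, b]]))
    (hderiv : ∀ x ∈ U, ∀ t ∈ Ι a b, HasDerivAt (F · t) (F' x t) x) :
    HasDerivAt (fun x => ∫ t in a..b, F x t) (∫ t in a..b, F' x₀ t) x₀ := by
  obtain ⟨K, hK, hKU, hKc⟩ := local_compact_nhds hU
  obtain ⟨C, hC⟩ := (hKc.prod isCompact_uIcc).exists_bound_of_continuousOn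
    (hF'.mono (prod_mono hKU le_rfl))
  have slice {G : 𝕜 → ℝ → E}
      (hG : ContinuousOn (fun p : 𝕜 × ℝ => G p.1 p.2) (U ×ˢ [[a, b]])) {x : 𝕜} (hx : x ∈ U) :
      IntervalIntegrable (G x) volume a b :=
    ContinuousOn.intervalIntegrable <| hG.comp (Continuous.prodMk_right x).continuousOn
      fun t ht => ⟨hx, ht⟩
  have hx₀ := mem_of_mem_nhds hU
  refine (intervalIntegral.hasDerivAt_integral_of_dominated_loc_of_deriv_le (bound := fun _ => C)
    hK ?_ (slice hF hx₀) (slice hF' hx₀).def'.aestronglyMeasurable ?_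
    intervalIntegrable_const ?_).2
  · filter_upwards [hU] with x hx using (slice hF hx).def'.aestronglyMeasurable
  · exact .of_forall fun t ht x hx => hC (x, t) ⟨hx, uIoc_subset_uIcc ht⟩
  · exact .of_forall fun t ht x hx => hderiv x (hKU hx) t ht

namespace Complex

theorem ofReal_mul_cpow {t : ℝ} (ht : 0 ≤ t) (w s : ℂ) :
    ((t : ℂ) * w) ^ s = (t : ℂ) ^ s * w ^ s := by
  rcases eq_or_ne s 0 with rfl | hs
  · simp
  rcases ht.eq_or_lt with rfl | ht
  · simp [zero_cpow hs]
  rcases eq_or_ne w 0 with rfl | hw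
  · simp [zero_cpow hs]
  have ht' : (t : ℂ) ≠ 0 := ofReal_ne_zero.mpr ht.ne'
  rw [cpow_def_of_ne_zero (mul_ne_zero ht' hw), log_ofReal_mul ht hw, ofReal_log ht.le,
    add_mul, exp_add, ← cpow_def_of_ne_zero ht', ← cpow_def_of_ne_zero hw]

theorem one_add_ofReal_mul_mem_slitPlane {t : ℝ} (ht : 0 ≤ t) {w : ℂ} (hw : w ∈ slitPlane) :
    1 + t * w ∈ slitPlane := by
  rcases ht.eq_or_lt with rfl | ht
  · simp
  rw [mem_slitPlane_iff] at hw ⊢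
  rcases hw with hw | hw
  · left
    simp only [add_re, one_re, mul_re, ofReal_re, ofReal_im, zero_mul, sub_zero]
    positivity
  · right
    simp [ht.ne', hw]

open scoped ComplexOrder in
theorem sub_one_mem_slitPlane {z : ℂ} (hz : z ∉ ofReal '' Iic 1) : z - 1 ∈ slitPlane := by
  rw [mem_slitPlane_iff_not_le_zero, sub_nonpos]
  exact fun h => hz ⟨z.re, (le_def.mp h).1, ext rfl (le_def.mp h).2.symm⟩

theorem differentiableOn_integral_ofReal_cpow_mul_one_add_mul_cpow {a b : ℂ}
    (ha : 0 < a.re) :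
    DifferentiableOn ℂ (fun w : ℂ => ∫ t in (0:ℝ)..1, (t : ℂ) ^ a * (1 + t * w) ^ b)
      slitPlane := by
  intro w hw
  have hmem : ∀ p ∈ slitPlane ×ˢ [[(0:ℝ), 1]], 1 + (p.2 : ℂ) * p.1 ∈ slitPlane :=
    fun p hp => one_add_ofReal_mul_mem_slitPlane (by simpa using hp.2.1) hp.1
  have hpow : Continuous fun p : ℂ × ℝ => (p.2 : ℂ) ^ a :=
    (continuous_ofReal_cpow_const ha).comp continuous_snd
  refine (intervalIntegral.hasDerivAt_integral_of_continuousOn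
    (F' := fun w t => (t : ℂ) ^ a * (b * (1 + t * w) ^ (b - 1) * t))
    (isOpen_slitPlane.mem_nhds hw) ?_ ?_ ?_).differentiableAt.differentiableWithinAt
  · exact hpow.continuousOn.mul ((by fun_prop : Continuous _).continuousOn.cpow_const hmem)
  · exact hpow.continuousOn.mul ((continuousOn_const.mul
      ((by fun_prop : Continuous _).continuousOn.cpow_const hmem)).mul (by fun_prop))
  · intro x hx t ht
    have hline : HasDerivAt (fun x : ℂ => 1 + t * x) t x := by
      simpa using ((hasDerivAt_id x).const_mul (t : ℂ)).const_add 1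
    have hmem : 1 + t * x ∈ slitPlane :=
      one_add_ofReal_mul_mem_slitPlane (by simpa using ht.1.le) hx
    exact (hline.cpow_const hmem).const_mul _

end Complex

theorem phiLeft_eq (z : ℂ) :
    phiLeft z = 2 * (z - 1) * (z - 1) ^ ((1 : ℂ) / 2) *
      ∫ t in (0:ℝ)..1, (t : ℂ) ^ ((1 : ℂ) / 2) * (1 + t * (z - 1)) ^ (-((1 : ℂ) / 2)) := by
  rw [phiLeft, mul_assoc _ ((z - 1) ^ _),
    ← intervalIntegral.integral_const_mul ((z - 1) ^ ((1 : ℂ) / 2))]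
  congr 1
  refine intervalIntegral.integral_congr fun t ht => ?_
  rw [uIcc_of_le zero_le_one] at ht
  simp only [ofReal_mul_cpow ht.1]
  ring

/-- `φ_←` is complex-differentiable on `B(1,1)∖(−∞,1]`. -/
theorem stmt_17 :
    DifferentiableOn ℂ phiLeft (ball (1 : ℂ) 1 \ (Complex.ofReal '' Set.Iic 1)) := by
  intro z hz
  have hw : z - 1 ∈ slitPlane := sub_one_mem_slitPlane hz.2
  have hsub : DifferentiableAt ℂ (fun z : ℂ => z - 1) z := differentiableAt_id.sub_const 1
  have hint := (differentiableOn_integral_ofReal_cpow_mul_one_add_mul_cpow (a := 1 / 2)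
    (b := -(1 / 2)) (by norm_num)).differentiableAt (isOpen_slitPlane.mem_nhds hw)
  rw [funext phiLeft_eq]
  exact ((hsub.const_mul 2).mul (hsub.cpow_const hw) |>.mul
    (hint.comp z hsub)).differentiableWithinAt
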